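/- arXiv:1704.07605 — 5 statements merged into one kernel-verified Lean document; each statement's English description precedes it below -/
import Mathlib

section
/- Let m > 0, a ∈ (−m, m) and M := √(m² − a²). Then for every integer n ≥ 2, d_n(M) · d_{n−1}(M) < d_0(M) · d_1(M). (This is the strict inequality d_{j+1/2} d_{j−1/2} < d_0 d_1 for all j = 3/2, 5/2, 7/2, …, answering Question 4.7 of Arrizabalaga–Mas–Vega in the affirmative.) -/
open Real Filter MeasureTheory
open Set

/-- Modified spherical Bessel functions of the first kind:
`i_0(z) = sinh z / z`, `i_1(z) = cosh z / z - sinh z / z²`,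
`i_{n+1}(z) = i_{n-1}(z) - ((2n+1)/z) i_n(z)`. -/
noncomputable def sbI : ℕ → ℝ → ℝ
  | 0 => fun z => Real.sinh z / z
  | 1 => fun z => Real.cosh z / z - Real.sinh z / z ^ 2
  | (n + 2) => fun z => sbI n z - ((2 * (n + 1 : ℝ) + 1) / z) * sbI (n + 1) z

/-- Modified spherical Bessel functions of the second kind:
`k_0(z) = e^{-z}/z`, `k_1(z) = e^{-z}(1/z + 1/z²)`,
`k_{n+1}(z) = k_{n-1}(z) + ((2n+1)/z) k_n(z)`. -/
noncomputable def sbK : ℕ → ℝ → ℝ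
  | 0 => fun z => Real.exp (-z) / z
  | 1 => fun z => Real.exp (-z) * (1 / z + 1 / z ^ 2)
  | (n + 2) => fun z => sbK n z + ((2 * (n + 1 : ℝ) + 1) / z) * sbK (n + 1) z

/-- `d_n(z) = z i_n(z) k_n(z) = I_{n+1/2}(z) K_{n+1/2}(z)`. -/
noncomputable def dCoef (n : ℕ) (z : ℝ) : ℝ := z * sbI n z * sbK n z

lemma sbI_rec (n : ℕ) (z : ℝ) : sbI (n+2) z = sbI n z - ((2 * (n + 1 : ℝ) + 1) / z) * sbI (n+1) z := rfl
lemma sbI_zero (z : ℝ) : sbI 0 z = Real.sinh z / z := rfl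
lemma sbI_one (z : ℝ) : sbI 1 z = Real.cosh z / z - Real.sinh z / z ^ 2 := rfl

lemma sbI_hasDeriv (n : ℕ) {z : ℝ} (hz : z ≠ 0) :
    HasDerivAt (sbI n) (sbI (n+1) z + ((n:ℝ)/z) * sbI n z) z := by
  induction n using Nat.twoStepInduction generalizing z with
  | zero =>
    have h : HasDerivAt (sbI 0) ((Real.cosh z * z - Real.sinh z * 1)/z^2) z :=
      (Real.hasDerivAt_sinh z).div (hasDerivAt_id z) hz
    convert h using 1
    rw [sbI_one, sbI_zero]
    push_cast
    field_simp
    ring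
  | one =>
    have h1 : HasDerivAt (fun z => Real.cosh z / z) ((Real.sinh z * z - Real.cosh z * 1)/z^2) z :=
      (Real.hasDerivAt_cosh z).div (hasDerivAt_id z) hz
    have h2 : HasDerivAt (fun z : ℝ => z^2) (2*z) z := by
      simpa using hasDerivAt_pow 2 z
    have h3 : HasDerivAt (fun z => Real.sinh z / z^2)
        ((Real.cosh z * z^2 - Real.sinh z * (2*z))/(z^2)^2) z :=
      (Real.hasDerivAt_sinh z).div h2 (pow_ne_zero 2 hz)
    have h : HasDerivAt (sbI 1)
        ((Real.sinh z * z - Real.cosh z * 1)/z^2 - (Real.cosh z * z^2 - Real.sinh z * (2*z))/(z^2)^2) z := h1.sub h3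
    convert h using 1
    rw [sbI_rec, sbI_zero, sbI_one]
    push_cast
    field_simp
    ring
  | more n ihn ihn1 =>
    have hc : HasDerivAt (fun z : ℝ => (2 * ((n:ℝ) + 1) + 1) / z)
        (-(2 * ((n:ℝ) + 1) + 1) / z^2) z := by
      have := ((hasDerivAt_inv hz).const_mul (2 * ((n:ℝ) + 1) + 1))
      refine this.congr_deriv (Eq.symm ?_)
      field_simp
    have hprod := hc.mul (ihn1 hz)
    have h := (ihn hz).sub hprod
    have heq : sbI (n+2) = fun x => sbI n x - (2 * ((n:ℝ) + 1) + 1) / x * sbI (n+1) x := rfl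
    rw [heq]
    refine h.congr_deriv (Eq.symm ?_)
    rw [sbI_rec (n+1), sbI_rec n]
    push_cast
    field_simp
    ring

lemma sinh_le_mul_exp {z : ℝ} (hz : 0 ≤ z) : Real.sinh z ≤ z * Real.exp z := by
  rw [Real.sinh_eq]
  have h1 : 1 - 2*z ≤ Real.exp (-(2*z)) := by
    have := Real.add_one_le_exp (-(2*z)); linarith
  have h2 : Real.exp (-z) = Real.exp z * Real.exp (-(2*z)) := by
    rw [← Real.exp_add]; ring_nf
  have h5 : Real.exp z * (1 - Real.exp (-(2*z))) ≤ Real.exp z * (2*z) :=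
    mul_le_mul_of_nonneg_left (by linarith) (Real.exp_pos z).le
  nlinarith [Real.exp_pos z]

lemma sbI_bound (n : ℕ) : ∃ C : ℝ, 0 ≤ C ∧ ∀ z : ℝ, 0 < z → z ≤ 1 → |sbI n z| ≤ C / z^n := by
  induction n using Nat.twoStepInduction with
  | zero =>
    refine ⟨Real.exp 1, (Real.exp_pos 1).le, fun z hz hz1 => ?_⟩
    have hsp : 0 < Real.sinh z := Real.sinh_pos_iff.mpr hz
    rw [sbI_zero, abs_of_nonneg (by positivity), pow_zero, div_one, div_le_iff₀ hz]
    calc Real.sinh z ≤ z * Real.exp z := sinh_le_mul_exp hz.le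
      _ ≤ Real.exp 1 * z := by
          have : Real.exp z ≤ Real.exp 1 := Real.exp_le_exp.mpr hz1
          nlinarith [Real.exp_pos z]
  | one =>
    refine ⟨Real.cosh 1 + Real.exp 1, by positivity, fun z hz hz1 => ?_⟩
    have hc : Real.cosh z ≤ Real.cosh 1 := by
      rw [Real.cosh_le_cosh, abs_of_pos hz, abs_one]; exact hz1
    have hs : Real.sinh z ≤ z * Real.exp 1 := by
      calc Real.sinh z ≤ z * Real.exp z := sinh_le_mul_exp hz.le
        _ ≤ z * Real.exp 1 := by
            have : Real.exp z ≤ Real.exp 1 := Real.exp_le_exp.mpr hz1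
            nlinarith
    have hsp : 0 ≤ Real.sinh z := (Real.sinh_pos_iff.mpr hz).le
    have hcp : 0 < Real.cosh z := Real.cosh_pos z
    rw [sbI_one]
    calc |Real.cosh z / z - Real.sinh z / z ^ 2|
        ≤ |Real.cosh z / z| + |Real.sinh z / z ^ 2| := abs_sub _ _
      _ = Real.cosh z / z + Real.sinh z / z ^ 2 := by
          rw [abs_of_nonneg (by positivity), abs_of_nonneg (by positivity)]
      _ ≤ Real.cosh 1 / z + (z * Real.exp 1) / z ^ 2 := by gcongr
      _ = (Real.cosh 1 + Real.exp 1) / z ^ 1 := by field_simp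
  | more n ihn ihn1 =>
    obtain ⟨C1, hC1, h1⟩ := ihn
    obtain ⟨C2, hC2, h2⟩ := ihn1
    refine ⟨C1 + (2*((n:ℝ)+1)+1)*C2, by positivity, fun z hz hz1 => ?_⟩
    rw [sbI_rec]
    have e2 := h2 z hz hz1
    have hzn : z^(n+2) ≤ z^n := pow_le_pow_of_le_one hz.le hz1 (by omega)
    have e1 : |sbI n z| ≤ C1 / z^(n+2) :=
      (h1 z hz hz1).trans (div_le_div_of_nonneg_left hC1 (pow_pos hz (n+2)) hzn)
    have habs : |(2 * ((n:ℝ) + 1) + 1) / z * sbI (n+1) z|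
        = (2*((n:ℝ)+1)+1)/z * |sbI (n+1) z| := by
      rw [abs_mul, abs_div, abs_of_nonneg (by positivity : (0:ℝ) ≤ 2*((n:ℝ)+1)+1), abs_of_pos hz]
    calc |sbI n z - (2 * ((n:ℝ) + 1) + 1) / z * sbI (n+1) z|
        ≤ |sbI n z| + |(2 * ((n:ℝ) + 1) + 1) / z * sbI (n+1) z| := abs_sub _ _
      _ = |sbI n z| + (2*((n:ℝ)+1)+1)/z * |sbI (n+1) z| := by rw [habs]
      _ ≤ C1 / z^(n+2) + (2*((n:ℝ)+1)+1)/z * (C2 / z^(n+1)) := by gcongr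
      _ = (C1 + (2*((n:ℝ)+1)+1)*C2) / z^(n+2) := by field_simp; ring

lemma sbI_pos (n : ℕ) : ∀ {z : ℝ}, 0 < z → 0 < sbI n z := by
  induction n with
  | zero =>
    intro z hz
    rw [sbI_zero]
    exact div_pos (Real.sinh_pos_iff.mpr hz) hz
  | succ n ih =>
    have hderiv : ∀ {w : ℝ}, 0 < w →
        HasDerivAt (fun u => u^(n+2) * sbI (n+1) u) (w^(n+2) * sbI n w) w := by
      intro w hw
      have h := (hasDerivAt_pow (n+2) w).mul (sbI_hasDeriv (n+1) hw.ne')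
      refine h.congr_deriv (Eq.symm ?_)
      simp only [show n+1+1 = n+2 from rfl]
      rw [sbI_rec n w]
      push_cast
      field_simp
      ring
    have hmono : StrictMonoOn (fun u => u^(n+2) * sbI (n+1) u) (Set.Ioi 0) := by
      apply strictMonoOn_of_deriv_pos (convex_Ioi 0)
      · exact fun w hw => ((hderiv hw).continuousAt).continuousWithinAt
      · intro w hw
        rw [interior_Ioi] at hw
        rw [(hderiv hw).deriv]
        exact mul_pos (pow_pos hw _) (ih hw)
    obtain ⟨C, hC, hB⟩ := sbI_bound (n+1)
    have hlim : Tendsto (fun u => u^(n+2) * sbI (n+1) u) (nhdsWithin 0 (Set.Ioi 0)) (nhds 0) := by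
      apply squeeze_zero_norm' (a := fun u => C * u)
      · filter_upwards [Ioc_mem_nhdsGT_of_mem (by constructor <;> norm_num : (0:ℝ) ∈ Set.Ico 0 1)] with u hu
        have hu0 : 0 < u := hu.1
        have := hB u hu0 hu.2
        have h1 : ‖u^(n+2) * sbI (n+1) u‖ = u^(n+2) * |sbI (n+1) u| := by
          rw [norm_mul, Real.norm_eq_abs, Real.norm_eq_abs, abs_of_pos (pow_pos hu0 _)]
        rw [h1]
        calc u^(n+2) * |sbI (n+1) u| ≤ u^(n+2) * (C / u^(n+1)) := by
              apply mul_le_mul_of_nonneg_left this (pow_pos hu0 _).le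
          _ = C * u := by field_simp; ring
      · have : Tendsto (fun u : ℝ => C * u) (nhds 0) (nhds 0) := by
          simpa using (continuous_mul_left C).tendsto (0:ℝ)
        exact this.mono_left nhdsWithin_le_nhds
    intro z hz
    have hnonneg : 0 ≤ (z/2)^(n+2) * sbI (n+1) (z/2) := by
      apply le_of_tendsto hlim
      filter_upwards [Ioo_mem_nhdsGT_of_mem (by constructor <;> [norm_num; exact half_pos hz] : (0:ℝ) ∈ Set.Ico 0 (z/2))] with u hu
      exact (hmono hu.1 (Set.mem_Ioi.mpr (half_pos hz)) hu.2).le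
    have hlt : (z/2)^(n+2) * sbI (n+1) (z/2) < z^(n+2) * sbI (n+1) z :=
      hmono (Set.mem_Ioi.mpr (half_pos hz)) (Set.mem_Ioi.mpr hz) (half_lt_self hz)
    have hGz : 0 < z^(n+2) * sbI (n+1) z := lt_of_le_of_lt hnonneg hlt
    rcases mul_pos_iff.mp hGz with ⟨_, h⟩ | ⟨h, _⟩
    · exact h
    · exact absurd (pow_pos hz (n+2)) (by linarith)

lemma sbK_rec (n : ℕ) (z : ℝ) : sbK (n+2) z = sbK n z + ((2 * (n + 1 : ℝ) + 1) / z) * sbK (n+1) z := rfl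

lemma sbK_pos (n : ℕ) {z : ℝ} (hz : 0 < z) : 0 < sbK n z := by
  induction n using Nat.twoStepInduction with
  | zero => exact div_pos (Real.exp_pos _) hz
  | one => apply mul_pos (Real.exp_pos _); positivity
  | more n ih1 ih2 =>
    rw [sbK_rec]
    have h1 : 0 < (2 * (n + 1 : ℝ) + 1) / z := by positivity
    nlinarith

/-- abstract real-number step for the upper bound -/
lemma kstep_U (n z kn kn1 : ℝ) (hn : 0 ≤ n) (hz : 0 < z) (hkn : 0 < kn) (hkn1 : 0 < kn1)
    (hLo : (n+1+Real.sqrt (n^2+z^2))*kn ≤ z*kn1) :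
    z*kn + (2*n+3)*kn1 < (n+2+Real.sqrt ((n+2)^2+z^2))*kn1 := by
  set s0 := Real.sqrt (n^2+z^2) with hs0def
  set s2 := Real.sqrt ((n+2)^2+z^2) with hs2def
  have hs0 : 0 ≤ s0 := Real.sqrt_nonneg _
  have hs0sq : s0^2 = n^2 + z^2 := Real.sq_sqrt (by positivity)
  have hs2sq : s2^2 = (n+2)^2 + z^2 := Real.sq_sqrt (by positivity)
  have hs0z : z ≤ s0 := by nlinarith [Real.sqrt_nonneg (n^2+z^2)]
  have hs2ge : s0 ≤ s2 := by rw [hs0def, hs2def]; apply Real.sqrt_le_sqrt; nlinarith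
  have hs2le : s2 ≤ s0 + 2 := by
    calc s2 ≤ Real.sqrt ((s0+2)^2) := by
          rw [hs2def]; apply Real.sqrt_le_sqrt; nlinarith
      _ = s0 + 2 := Real.sqrt_sq (by linarith)
  have key : z^2 < (s2 - (n+1)) * (n+1+s0) := by
    have h1 : (s2-s0)*(s2+s0) = 4*n+4 := by linear_combination hs2sq - hs0sq
    have h2 : 2*n+1 < (s2-s0)*(n+1+s0) := by
      nlinarith [mul_nonneg (sub_nonneg.mpr hs2ge) hs0]
    nlinarith
  have hpos : (0:ℝ) < n+1+s0 := by linarith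
  have h3 : (n+1+s0) * (z * kn) ≤ z * (z * kn1) := by nlinarith [mul_le_mul_of_nonneg_left hLo hz.le]
  have h4 : (n+1+s0) * (z * kn) < (n+1+s0) * ((s2 - (n+1)) * kn1) := by
    nlinarith [mul_lt_mul_of_pos_right key hkn1]
  have hfin : z * kn < (s2 - (n+1)) * kn1 := lt_of_mul_lt_mul_left h4 hpos.le
  linarith

/-- abstract real-number step for the lower bound -/
lemma kstep_Lo (n z kn kn1 : ℝ) (hn : 0 ≤ n) (hz : 0 < z) (hkn : 0 < kn) (hkn1 : 0 < kn1)
    (hU : z*kn1 < (n+1+Real.sqrt ((n+1)^2+z^2))*kn) :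
    (n+2+Real.sqrt ((n+1)^2+z^2))*kn1 ≤ z*kn + (2*n+3)*kn1 := by
  set s1 := Real.sqrt ((n+1)^2+z^2) with hs1def
  have hs1sq : s1^2 = (n+1)^2 + z^2 := Real.sq_sqrt (by positivity)
  have hs1gt : n+1 < s1 := by nlinarith [Real.sqrt_nonneg ((n+1)^2+z^2)]
  have key : (s1 - (n+1)) * (s1 + (n+1)) = z^2 := by linear_combination hs1sq
  have h3 : (s1 - (n+1)) * (z * kn1) < (s1 - (n+1)) * ((n+1+s1) * kn) :=
    mul_lt_mul_of_pos_left hU (by linarith)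
  have h4 : z * ((s1 - (n+1)) * kn1) < z * (z * kn) := by nlinarith [h3, key]
  have hfin : (s1 - (n+1)) * kn1 < z * kn := lt_of_mul_lt_mul_left h4 hz.le
  linarith

lemma sbK_ratio (n : ℕ) {z : ℝ} (hz : 0 < z) :
    z * sbK (n+1) z < ((n:ℝ)+1 + Real.sqrt (((n:ℝ)+1)^2 + z^2)) * sbK n z ∧
    ((n:ℝ)+1 + Real.sqrt ((n:ℝ)^2 + z^2)) * sbK n z ≤ z * sbK (n+1) z := by
  induction n with
  | zero =>
    have hk0 : 0 < sbK 0 z := sbK_pos 0 hz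
    have hid : z * sbK 1 z = (z + 1) * sbK 0 z := by
      show z * (Real.exp (-z) * (1 / z + 1 / z ^ 2)) = (z+1) * (Real.exp (-z) / z)
      field_simp
    have h1 : z < Real.sqrt ((((0:ℕ):ℝ)+1)^2 + z^2) := by
      have h0 : (((0:ℕ):ℝ)+1)^2 + z^2 = 1 + z^2 := by norm_num
      rw [h0]
      have := Real.sq_sqrt (show (0:ℝ) ≤ 1+z^2 by positivity)
      nlinarith [Real.sqrt_nonneg (1+z^2)]
    constructor
    · rw [hid]
      exact mul_lt_mul_of_pos_right (by push_cast at h1 ⊢; linarith) hk0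
    · rw [hid, show (((0:ℕ):ℝ))^2 + z^2 = z^2 by norm_num, Real.sqrt_sq hz.le]
      push_cast
      apply le_of_eq; ring
  | succ n ih =>
    obtain ⟨hU, hLo⟩ := ih
    have hkn : 0 < sbK n z := sbK_pos n hz
    have hkn1 : 0 < sbK (n+1) z := sbK_pos (n+1) hz
    have hrec : z * sbK (n+2) z = z * sbK n z + (2*(n:ℝ)+3) * sbK (n+1) z := by
      rw [sbK_rec]; field_simp; ring
    constructor
    · have := kstep_U (n:ℝ) z (sbK n z) (sbK (n+1) z) (Nat.cast_nonneg n) hz hkn hkn1 hLo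
      push_cast [hrec]
      push_cast at this
      convert this using 3 <;> ring
    · have := kstep_Lo (n:ℝ) z (sbK n z) (sbK (n+1) z) (Nat.cast_nonneg n) hz hkn hkn1 hU
      push_cast [hrec]
      push_cast at this
      convert this using 3 <;> ring

lemma deriv_key (ν z s a b : ℝ) (hz : 0 < z) (hs : 0 < s)
    (hssq : s^2 = (ν+1)^2 + z^2) (hb : 0 < b) (hν : 0 ≤ ν)
    (hcon : z*a - (ν+1+s)*b = 0) :
    0 < 1*a + z*(b + (ν/z)*a) -
      ((z/s)*b + (ν+1+s)*((a - ((2*(ν+1)+1)/z)*b) + ((ν+1)/z)*b)) := by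
  have key : z*s*(1*a + z*(b + (ν/z)*a) -
      ((z/s)*b + (ν+1+s)*((a - ((2*(ν+1)+1)/z)*b) + ((ν+1)/z)*b)))
      = (ν+1)*(s+ν+1)*b := by
    field_simp
    linear_combination (-s^2)*hcon + (1-s)*b*hssq
  have hpos : 0 < z*s*(1*a + z*(b + (ν/z)*a) -
      ((z/s)*b + (ν+1+s)*((a - ((2*(ν+1)+1)/z)*b) + ((ν+1)/z)*b))) := by
    rw [key]; positivity
  rcases mul_pos_iff.mp hpos with ⟨_, h⟩ | ⟨h, hneg⟩
  · exact h
  · nlinarith [mul_pos hz hs]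

lemma sbI_ratio (n : ℕ) {z : ℝ} (hz : 0 < z) :
    ((n:ℝ)+1 + Real.sqrt (((n:ℝ)+1)^2 + z^2)) * sbI (n+1) z < z * sbI n z := by
  set ν : ℝ := (n:ℝ) with hν
  have hν0 : 0 ≤ ν := Nat.cast_nonneg n
  set g : ℝ → ℝ := fun w => w * sbI n w - (ν+1 + Real.sqrt ((ν+1)^2 + w^2)) * sbI (n+1) w with hgdef
  -- derivative of g
  have hgderiv : ∀ {w : ℝ}, 0 < w → HasDerivAt g
      (1 * sbI n w + w * (sbI (n+1) w + (ν/w) * sbI n w) -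
        ((w / Real.sqrt ((ν+1)^2+w^2)) * sbI (n+1) w +
          (ν+1 + Real.sqrt ((ν+1)^2+w^2)) * (sbI (n+2) w + ((ν+1)/w) * sbI (n+1) w))) w := by
    intro w hw
    have hinner : HasDerivAt (fun u : ℝ => (ν+1)^2 + u^2) (2*w) w := by
      simpa using ((hasDerivAt_pow 2 w).const_add ((ν+1)^2))
    have hsne : Real.sqrt ((ν+1)^2 + w^2) ≠ 0 := by positivity
    have houter := (Real.hasDerivAt_sqrt (show ((ν+1)^2 + w^2) ≠ 0 by positivity)).comp w hinner
    have hsq : HasDerivAt (fun u : ℝ => ν+1 + Real.sqrt ((ν+1)^2 + u^2))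
        (w / Real.sqrt ((ν+1)^2+w^2)) w := by
      have h2 := houter.const_add (ν+1)
      refine h2.congr_deriv (Eq.symm ?_)
      field_simp
    have hIn := sbI_hasDeriv n hw.ne'
    have hIn1 : HasDerivAt (sbI (n+1)) (sbI (n+2) w + ((ν+1)/w) * sbI (n+1) w) w := by
      have := sbI_hasDeriv (n+1) hw.ne'
      convert this using 2 <;> push_cast <;> ring
    exact ((hasDerivAt_id w).mul hIn).sub (hsq.mul hIn1)
  -- positivity of g for small w
  have hsmall : ∀ w : ℝ, 0 < w → w^2 ≤ 2*ν+3 → 0 < g w := by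
    intro w hw hw2
    have hs2 : Real.sqrt ((ν+1)^2 + w^2) ≤ ν+2 := by
      calc Real.sqrt ((ν+1)^2 + w^2) ≤ Real.sqrt ((ν+2)^2) := by
            apply Real.sqrt_le_sqrt; nlinarith
        _ = ν+2 := Real.sqrt_sq (by linarith)
    have h1 : 0 < sbI (n+1) w := sbI_pos (n+1) hw
    have h2 : 0 < sbI (n+2) w := sbI_pos (n+2) hw
    have h3 : w * sbI (n+2) w = w * sbI n w - (2*ν+3) * sbI (n+1) w := by
      rw [sbI_rec]; field_simp; ring
    have h4 : 0 < w * sbI n w - (2*ν+3) * sbI (n+1) w := by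
      rw [← h3]; exact mul_pos hw h2
    show 0 < w * sbI n w - (ν+1 + Real.sqrt ((ν+1)^2 + w^2)) * sbI (n+1) w
    nlinarith
  -- main claim
  suffices h : ∀ w : ℝ, 0 < w → 0 < g w by
    have := h z hz
    rw [hgdef] at this
    simp only at this
    linarith
  by_contra hcontra
  push_neg at hcontra
  obtain ⟨w₁, hw₁, hgw₁⟩ := hcontra
  set A := {w : ℝ | 0 < w ∧ g w ≤ 0} with hA
  have hne : A.Nonempty := ⟨w₁, hw₁, hgw₁⟩
  have hb3 : (0:ℝ) < Real.sqrt (2*ν+3) := Real.sqrt_pos.mpr (by linarith)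
  have hlb : ∀ w ∈ A, Real.sqrt (2*ν+3) ≤ w := by
    intro w hw
    obtain ⟨hw0, hwg⟩ := hw
    by_contra hlt
    push_neg at hlt
    have : w^2 ≤ 2*ν+3 := by
      nlinarith [Real.sq_sqrt (show (0:ℝ) ≤ 2*ν+3 by linarith), Real.sqrt_nonneg (2*ν+3)]
    exact absurd hwg (not_le.mpr (hsmall w hw0 this))
  have hbdd : BddBelow A := ⟨Real.sqrt (2*ν+3), hlb⟩
  set z₀ := sInf A with hz₀def
  have hz₀lb : Real.sqrt (2*ν+3) ≤ z₀ := le_csInf hne hlb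
  have hz₀pos : 0 < z₀ := lt_of_lt_of_le hb3 hz₀lb
  have hcont : ContinuousAt g z₀ := (hgderiv hz₀pos).continuousAt
  -- g z₀ ≤ 0
  have hg0le : g z₀ ≤ 0 := by
    obtain ⟨u, _, hulim, huA⟩ := exists_seq_tendsto_sInf hne hbdd
    have := hcont.tendsto.comp hulim
    exact le_of_tendsto this (Eventually.of_forall (fun i => (huA i).2))
  -- no w below z₀ in A
  have hglt : ∀ w : ℝ, 0 < w → w < z₀ → 0 < g w := by
    intro w hw0 hwlt
    by_contra hle
    push_neg at hle
    exact absurd hwlt (not_lt.mpr (csInf_le hbdd ⟨hw0, hle⟩))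
  -- rule out g z₀ < 0
  rcases lt_or_eq_of_le hg0le with hg0 | hg0
  · have hev : ∀ᶠ w in nhdsWithin z₀ (Iio z₀), g w < 0 := by
      have h1 : ∀ᶠ w in nhds z₀, g w < 0 := hcont.eventually_lt_const hg0
      exact eventually_nhdsWithin_of_eventually_nhds h1
    have hev2 : ∀ᶠ w in nhdsWithin z₀ (Iio z₀), 0 < w ∧ w < z₀ := by
      filter_upwards [Ioo_mem_nhdsLT_of_mem (show z₀ ∈ Ioc 0 z₀ from ⟨hz₀pos, le_rfl⟩)] with u hu
      exact ⟨hu.1, hu.2⟩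
    obtain ⟨w, hw1, hw2⟩ := (hev.and hev2).exists
    exact absurd (hglt w hw2.1 hw2.2) (not_lt.mpr hw1.le)
  -- g z₀ = 0 : derivative is positive, contradiction
  · have hs0 : 0 < Real.sqrt ((ν+1)^2+z₀^2) := by positivity
    have hg0' : z₀ * sbI n z₀ - (ν+1 + Real.sqrt ((ν+1)^2+z₀^2)) * sbI (n+1) z₀ = 0 := hg0
    have hc2 : sbI (n+2) z₀ = sbI n z₀ - ((2*(ν+1)+1)/z₀) * sbI (n+1) z₀ := by
      rw [sbI_rec]
    have hDpos : 0 < 1 * sbI n z₀ + z₀ * (sbI (n+1) z₀ + (ν/z₀) * sbI n z₀) -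
        ((z₀ / Real.sqrt ((ν+1)^2+z₀^2)) * sbI (n+1) z₀ +
          (ν+1 + Real.sqrt ((ν+1)^2+z₀^2)) * (sbI (n+2) z₀ + ((ν+1)/z₀) * sbI (n+1) z₀)) := by
      rw [hc2]
      exact deriv_key ν z₀ (Real.sqrt ((ν+1)^2+z₀^2)) (sbI n z₀) (sbI (n+1) z₀)
        hz₀pos hs0 (Real.sq_sqrt (by positivity)) (sbI_pos (n+1) hz₀pos) hν0 hg0'
    have hslope := (hasDerivAt_iff_tendsto_slope.mp (hgderiv hz₀pos))
    have hslope' : Tendsto (slope g z₀) (nhdsWithin z₀ (Iio z₀)) (nhds _) :=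
      hslope.mono_left (nhdsWithin_mono _ (fun x hx => ne_of_lt hx))
    have hevs : ∀ᶠ w in nhdsWithin z₀ (Iio z₀), 0 < slope g z₀ w :=
      hslope'.eventually (eventually_gt_nhds hDpos)
    have hev2 : ∀ᶠ w in nhdsWithin z₀ (Iio z₀), 0 < w ∧ w < z₀ := by
      filter_upwards [Ioo_mem_nhdsLT_of_mem (show z₀ ∈ Ioc 0 z₀ from ⟨hz₀pos, le_rfl⟩)] with u hu
      exact ⟨hu.1, hu.2⟩
    obtain ⟨w, hw1, hw2⟩ := (hevs.and hev2).exists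
    have hgw : 0 < g w := hglt w hw2.1 hw2.2
    rw [slope_def_field] at hw1
    have hneg : (g w - g z₀) / (w - z₀) < 0 :=
      div_neg_of_pos_of_neg (by rw [hg0]; linarith) (by linarith [hw2.2])
    linarith [hw1, hneg]


lemma dCoef_pos (n : ℕ) {z : ℝ} (hz : 0 < z) : 0 < dCoef n z :=
  mul_pos (mul_pos hz (sbI_pos n hz)) (sbK_pos n hz)

lemma dCoef_succ_lt (n : ℕ) {z : ℝ} (hz : 0 < z) : dCoef (n+1) z < dCoef n z := by
  set s := Real.sqrt (((n:ℝ)+1)^2 + z^2) with hs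
  have hspos : 0 < (n:ℝ)+1+s := by positivity
  have h1 := sbI_ratio n hz
  have h2 := (sbK_ratio n hz).1
  have hi1 : 0 < sbI (n+1) z := sbI_pos (n+1) hz
  have hk1 : 0 < sbK (n+1) z := sbK_pos (n+1) hz
  have hmul := mul_lt_mul'' h1 h2 (by positivity) (by positivity)
  have h3 : ((n:ℝ)+1+s) * (z * sbI (n+1) z * sbK (n+1) z)
      < ((n:ℝ)+1+s) * (z * sbI n z * sbK n z) := by nlinarith [hmul]
  have h4 := lt_of_mul_lt_mul_left h3 hspos.le
  simpa [dCoef] using h4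

lemma dCoef_lt_of_lt {j k : ℕ} (h : j < k) {z : ℝ} (hz : 0 < z) : dCoef k z < dCoef j z := by
  induction k with
  | zero => omega
  | succ k ih =>
    rcases Nat.lt_succ_iff_lt_or_eq.mp h with h' | h'
    · exact (dCoef_succ_lt k hz).trans (ih h')
    · subst h'; exact dCoef_succ_lt j hz

/-- For `M = √(m²-a²)` with `m > 0`, `a ∈ (-m, m)`, the strict inequality
`d_n(M) d_{n-1}(M) < d_0(M) d_1(M)` holds for all integers `n ≥ 2`
(Question 4.7 of Arrizabalaga–Mas–Vega, answered in the affirmative). -/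
theorem dCoef_prod_lt (m a : ℝ) (hm : 0 < m) (ha : a ∈ Set.Ioo (-m) m)
    (n : ℕ) (hn : 2 ≤ n) :
    dCoef n (Real.sqrt (m ^ 2 - a ^ 2)) * dCoef (n - 1) (Real.sqrt (m ^ 2 - a ^ 2)) <
      dCoef 0 (Real.sqrt (m ^ 2 - a ^ 2)) * dCoef 1 (Real.sqrt (m ^ 2 - a ^ 2)) := by
  obtain ⟨ha1, ha2⟩ := ha
  have hz : 0 < Real.sqrt (m ^ 2 - a ^ 2) := Real.sqrt_pos.mpr (by nlinarith)
  set z := Real.sqrt (m ^ 2 - a ^ 2)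
  have hd1 : 0 < dCoef 1 z := dCoef_pos 1 hz
  have hdn : 0 < dCoef n z := dCoef_pos n hz
  have hn0 : dCoef n z < dCoef 0 z := dCoef_lt_of_lt (by omega) hz
  have hn1 : dCoef (n-1) z ≤ dCoef 1 z := by
    rcases Nat.lt_or_ge 1 (n-1) with h | h
    · exact (dCoef_lt_of_lt h hz).le
    · have : n - 1 = 1 := by omega
      rw [this]
  calc dCoef n z * dCoef (n-1) z ≤ dCoef n z * dCoef 1 z := by
        exact mul_le_mul_of_nonneg_left hn1 hdn.le
    _ < dCoef 0 z * dCoef 1 z := by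
        exact mul_lt_mul_of_pos_right hn0 hd1
end

section
/- For every M > 0, d_2(M) < d_0(M). Equivalently, for every M > 0, 3(M³ + 2M² + 3M + 3) sinh(M) < 3M(M² + 3M + 3) cosh(M), since d_2(M) − d_0(M) = e^{−M} M^{−5} [3(M³ + 2M² + 3M + 3) sinh(M) − 3M(M² + 3M + 3) cosh(M)]. -/
open Real Filter MeasureTheory

/-- `1 + x + x²/2 < eˣ` for `x > 0` (stated with `x = 2M`). -/
lemma quad_lt_exp (x : ℝ) (hx : 0 < x) : 1 + 2*x + 2*x^2 < Real.exp (2*x) := by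
  have h4 : ∑ i ∈ Finset.range 4, (2*x)^i / i.factorial ≤ Real.exp (2*x) :=
    Real.sum_le_exp_of_nonneg (by positivity) 4
  simp [Finset.sum_range_succ, Nat.factorial] at h4
  nlinarith [pow_pos hx 3]

/-- Key inequality: `(3 - M²) e^{2M} < 2M³ + 5M² + 6M + 3` for `M > 0`. -/
lemma key_ineq (M : ℝ) (hM : 0 < M) :
    (3 - M^2) * Real.exp (2*M) < 2*M^3 + 5*M^2 + 6*M + 3 := by
  set h : ℝ → ℝ := fun x => (3 + 6*x + 5*x^2 + 2*x^3) * Real.exp (-(2*x)) + x^2 - 3 with hh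
  have hderiv : ∀ x : ℝ, HasDerivAt h
      ((6 + 10*x + 6*x^2) * Real.exp (-(2*x))
        + (3 + 6*x + 5*x^2 + 2*x^3) * (Real.exp (-(2*x)) * (-2)) + 2*x) x := by
    intro x
    have he : HasDerivAt (fun x : ℝ => Real.exp (-(2*x))) (Real.exp (-(2*x)) * (-2)) x := by
      have h1 : HasDerivAt (fun x : ℝ => -(2*x)) (-2) x := by
        exact (((hasDerivAt_id x).const_mul (2:ℝ)).neg).congr_deriv (by ring)
      exact (Real.hasDerivAt_exp (-(2*x))).comp x h1
    have hp : HasDerivAt (fun x : ℝ => 3 + 6*x + 5*x^2 + 2*x^3) (6 + 10*x + 6*x^2) x := by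
      have := ((((hasDerivAt_id x).const_mul (6:ℝ)).const_add 3).add
        ((hasDerivAt_pow 2 x).const_mul (5:ℝ))).add ((hasDerivAt_pow 3 x).const_mul (2:ℝ))
      exact this.congr_deriv (by norm_num; ring)
    have hsq : HasDerivAt (fun x : ℝ => x^2 - 3) (2*x) x := by
      simpa using (hasDerivAt_pow 2 x).sub_const 3
    have H := (hp.mul he).add hsq
    have hfe : h = fun x : ℝ => (3 + 6*x + 5*x^2 + 2*x^3) * Real.exp (-(2*x)) + (x^2 - 3) := by
      funext y; simp only [hh]; ring
    rw [hfe]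
    exact H
  have hmono : StrictMonoOn h (Set.Ici (0:ℝ)) := by
    apply strictMonoOn_of_deriv_pos (convex_Ici 0)
    · exact (Continuous.add (by continuity) continuous_const).continuousOn
    · intro x hx
      rw [interior_Ici] at hx
      rw [(hderiv x).deriv]
      have hq := quad_lt_exp x hx
      have hexp : Real.exp (-(2*x)) * Real.exp (2*x) = 1 := by
        rw [← Real.exp_add]; norm_num
      have hepos := Real.exp_pos (-(2*x))
      have hb : Real.exp (-(2*x)) * (1 + 2*x + 2*x^2) < 1 := by
        nlinarith [mul_lt_mul_of_pos_left hq hepos]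
      nlinarith [mul_pos hx (sub_pos.2 hb)]
  have h0 : h 0 = 0 := by simp [hh]
  have hpos : 0 < h M := by
    have := hmono (Set.self_mem_Ici) (Set.mem_Ici.2 hM.le) hM
    rwa [h0] at this
  have hexp : Real.exp (-(2*M)) * Real.exp (2*M) = 1 := by
    rw [← Real.exp_add]; norm_num
  have hepos2 := Real.exp_pos (2*M)
  simp only [hh] at hpos
  have h2 : (3+6*M+5*M^2+2*M^3) * (Real.exp (-(2*M)) * Real.exp (2*M))
      = 3+6*M+5*M^2+2*M^3 := by rw [hexp]; ring
  nlinarith [mul_pos hpos hepos2, h2]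

/-- The inequality in `sinh`/`cosh` form. -/
lemma second_ineq (M : ℝ) (hM : 0 < M) :
    3 * (M ^ 3 + 2 * M ^ 2 + 3 * M + 3) * Real.sinh M <
      3 * M * (M ^ 2 + 3 * M + 3) * Real.cosh M := by
  have key := key_ineq M hM
  rw [Real.sinh_eq, Real.cosh_eq]
  have hE : Real.exp (2*M) = Real.exp M ^ 2 := by
    rw [← Real.exp_nat_mul]; norm_num [mul_comm]
  have hEF : Real.exp M * Real.exp (-M) = 1 := by
    rw [← Real.exp_add]; norm_num
  have hF := Real.exp_pos (-M)
  have hE0 := Real.exp_pos M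
  rw [hE] at key
  have h3 : Real.exp M ^ 2 * Real.exp (-M) = Real.exp M := by
    nlinarith [hEF]
  have h4 : (3 - M^2) * Real.exp M < (2*M^3 + 5*M^2 + 6*M + 3) * Real.exp (-M) := by
    nlinarith [mul_lt_mul_of_pos_right key hF, h3]
  nlinarith [h4]

/-- For every `M > 0`, `d_2(M) < d_0(M)`; equivalently
`3(M³ + 2M² + 3M + 3) sinh M < 3M(M² + 3M + 3) cosh M`. -/
theorem d2_lt_d0 (M : ℝ) (hM : 0 < M) :
    dCoef 2 M < dCoef 0 M ∧
      3 * (M ^ 3 + 2 * M ^ 2 + 3 * M + 3) * Real.sinh M <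
        3 * M * (M ^ 2 + 3 * M + 3) * Real.cosh M := by
  have hs := second_ineq M hM
  refine ⟨?_, hs⟩
  have hne : M ≠ 0 := hM.ne'
  rw [← sub_pos]
  have heq : dCoef 0 M - dCoef 2 M = Real.exp (-M) / M^5 *
      (3 * M * (M ^ 2 + 3 * M + 3) * Real.cosh M -
        3 * (M ^ 3 + 2 * M ^ 2 + 3 * M + 3) * Real.sinh M) := by
    have hI2 : sbI 2 M = sbI 0 M - ((2 * ((0:ℕ) + 1 : ℝ) + 1) / M) * sbI 1 M := rfl
    have hK2 : sbK 2 M = sbK 0 M + ((2 * ((0:ℕ) + 1 : ℝ) + 1) / M) * sbK 1 M := rfl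
    show M * sbI 0 M * sbK 0 M - M * sbI 2 M * sbK 2 M = _
    rw [hI2, hK2]
    simp only [sbI, sbK]
    push_cast
    field_simp
    ring
  rw [heq]
  apply mul_pos (by positivity)
  linarith
end

section
/- Let m > 0, a ∈ (−m, m), M := √(m² − a²), and let n ≥ 1 be an integer. For k = n, define f(r) := r · i_n(Mr) and g(r) := (M/(m+a)) r · i_{n−1}(Mr); for k = −n, define f(r) := r · i_{n−1}(Mr) and g(r) := (M/(m+a)) r · i_n(Mr). Then in both cases f and g are differentiable on (0, ∞) and satisfy, for all r > 0, the radial Dirac eigenvalue system: (m − a) f(r) − g'(r) + (k/r) g(r) = 0 and f'(r) + (k/r) f(r) − (m + a) g(r) = 0. -/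
open Real Filter MeasureTheory

lemma sbI_hasDerivAt (n : ℕ) : ∀ z : ℝ, 0 < z →
    HasDerivAt (sbI n) (sbI (n + 1) z + ((n : ℝ) / z) * sbI n z) z := by
  induction n using Nat.twoStepInduction with
  | zero =>
    intro z hz
    have h : HasDerivAt (fun z : ℝ => Real.sinh z / z)
        ((Real.cosh z * z - Real.sinh z * 1) / z ^ 2) z :=
      (Real.hasDerivAt_sinh z).div (hasDerivAt_id z) hz.ne'
    have : sbI 0 = fun z : ℝ => Real.sinh z / z := by simp [sbI]
    rw [this]
    convert h using 1
    simp only [sbI]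
    field_simp
    ring
  | one =>
    intro z hz
    have h1 : HasDerivAt (fun z : ℝ => Real.cosh z / z)
        ((Real.sinh z * z - Real.cosh z * 1) / z ^ 2) z :=
      (Real.hasDerivAt_cosh z).div (hasDerivAt_id z) hz.ne'
    have h2 : HasDerivAt (fun z : ℝ => Real.sinh z / z ^ 2)
        ((Real.cosh z * z ^ 2 - Real.sinh z * (2 * z ^ 1)) / (z ^ 2) ^ 2) z :=
      (Real.hasDerivAt_sinh z).div (hasDerivAt_pow 2 z) (by positivity)
    have h := h1.sub h2
    have he : sbI 1 = fun z : ℝ => Real.cosh z / z - Real.sinh z / z ^ 2 := by simp [sbI]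
    rw [he]
    refine h.congr_deriv ?_
    simp only [sbI]
    field_simp
    ring
  | more n ih ih' =>
    intro z hz
    have hdiv : HasDerivAt (fun z : ℝ => (2 * (n + 1 : ℝ) + 1) / z)
        ((0 * z - (2 * (n + 1 : ℝ) + 1) * 1) / z ^ 2) z :=
      (hasDerivAt_const z _).div (hasDerivAt_id z) hz.ne'
    have h := (ih z hz).sub (hdiv.mul (ih' z hz))
    have he : sbI (n + 2) = fun z : ℝ =>
        sbI n z - ((2 * (n + 1 : ℝ) + 1) / z) * sbI (n + 1) z := by simp [sbI]
    rw [he]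
    refine h.congr_deriv ?_
    have hrec2 : sbI (n + 2) z = sbI n z - ((2 * (n + 1 : ℝ) + 1) / z) * sbI (n + 1) z := by
      simp [sbI]
    have hrec3 : sbI (n + 3) z = sbI (n + 1) z - ((2 * (n + 2 : ℝ) + 1) / z) * sbI (n + 2) z := by
      show sbI (n + 1 + 2) z = _
      simp only [sbI]
      push_cast
      ring
    rw [hrec3, hrec2]
    push_cast
    field_simp
    ring

/-- The interior (regular at the origin) solutions of the radial Dirac eigenvalue system:
for `k = n`, `f(r) = r i_n(Mr)`, `g(r) = (M/(m+a)) r i_{n-1}(Mr)`; for `k = -n`,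
`f(r) = r i_{n-1}(Mr)`, `g(r) = (M/(m+a)) r i_n(Mr)`. In both cases `f, g` are
differentiable on `(0,∞)` and satisfy `(m-a) f - g' + (k/r) g = 0` and
`f' + (k/r) f - (m+a) g = 0`. -/
theorem radial_dirac_interior_solution (m a : ℝ) (hm : 0 < m) (ha : a ∈ Set.Ioo (-m) m)
    (M : ℝ) (hM : M = Real.sqrt (m ^ 2 - a ^ 2)) (n : ℕ) (hn : 1 ≤ n) :
    (∀ r : ℝ, 0 < r →
      DifferentiableAt ℝ (fun r : ℝ => r * sbI n (M * r)) r ∧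
      DifferentiableAt ℝ (fun r : ℝ => (M / (m + a)) * (r * sbI (n - 1) (M * r))) r ∧
      (m - a) * (r * sbI n (M * r)) -
          deriv (fun r : ℝ => (M / (m + a)) * (r * sbI (n - 1) (M * r))) r +
          ((n : ℝ) / r) * ((M / (m + a)) * (r * sbI (n - 1) (M * r))) = 0 ∧
      deriv (fun r : ℝ => r * sbI n (M * r)) r + ((n : ℝ) / r) * (r * sbI n (M * r)) -
          (m + a) * ((M / (m + a)) * (r * sbI (n - 1) (M * r))) = 0) ∧
    (∀ r : ℝ, 0 < r →
      DifferentiableAt ℝ (fun r : ℝ => r * sbI (n - 1) (M * r)) r ∧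
      DifferentiableAt ℝ (fun r : ℝ => (M / (m + a)) * (r * sbI n (M * r))) r ∧
      (m - a) * (r * sbI (n - 1) (M * r)) -
          deriv (fun r : ℝ => (M / (m + a)) * (r * sbI n (M * r))) r +
          ((-(n : ℝ)) / r) * ((M / (m + a)) * (r * sbI n (M * r))) = 0 ∧
      deriv (fun r : ℝ => r * sbI (n - 1) (M * r)) r +
          ((-(n : ℝ)) / r) * (r * sbI (n - 1) (M * r)) -
          (m + a) * ((M / (m + a)) * (r * sbI n (M * r))) = 0) := by
  obtain ⟨k, rfl⟩ : ∃ k, n = k + 1 := ⟨n - 1, (Nat.succ_pred_eq_of_pos hn).symm⟩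
  have hk1 : k + 1 - 1 = k := rfl
  rw [hk1]
  have hma : 0 < m + a := by linarith [ha.1]
  have hmma : 0 < m - a := by linarith [ha.2]
  have hM2 : M ^ 2 = (m - a) * (m + a) := by
    rw [hM, Real.sq_sqrt (by nlinarith : (0:ℝ) ≤ m ^ 2 - a ^ 2)]; ring
  have hMpos : 0 < M := by
    rw [hM]; exact Real.sqrt_pos.mpr (by nlinarith)
  have key : ∀ r : ℝ, 0 < r →
      HasDerivAt (fun r : ℝ => r * sbI k (M * r))
        (1 * sbI k (M * r) + r * ((sbI (k + 1) (M * r)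
          + ((k : ℝ) / (M * r)) * sbI k (M * r)) * (M * 1))) r ∧
      HasDerivAt (fun r : ℝ => r * sbI (k + 1) (M * r))
        (1 * sbI (k + 1) (M * r) + r * ((sbI k (M * r)
          - (((k : ℝ) + 2) / (M * r)) * sbI (k + 1) (M * r)) * (M * 1))) r := by
    intro r hr
    have hz : 0 < M * r := mul_pos hMpos hr
    have hD0 := sbI_hasDerivAt k (M * r) hz
    have hD1 : HasDerivAt (sbI (k + 1))
        (sbI k (M * r) - (((k : ℝ) + 2) / (M * r)) * sbI (k + 1) (M * r)) (M * r) := by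
      have h := sbI_hasDerivAt (k + 1) (M * r) hz
      convert h using 1
      have hrec : sbI (k + 2) (M * r)
          = sbI k (M * r) - ((2 * ((k : ℝ) + 1) + 1) / (M * r)) * sbI (k + 1) (M * r) := by
        simp only [sbI]
      rw [hrec]; push_cast; field_simp; ring
    have hc0 : HasDerivAt (fun r : ℝ => sbI k (M * r))
        ((sbI (k + 1) (M * r) + ((k : ℝ) / (M * r)) * sbI k (M * r)) * (M * 1)) r :=
      HasDerivAt.comp r hD0 ((hasDerivAt_id r).const_mul M)
    have hc1 : HasDerivAt (fun r : ℝ => sbI (k + 1) (M * r))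
        ((sbI k (M * r) - (((k : ℝ) + 2) / (M * r)) * sbI (k + 1) (M * r)) * (M * 1)) r :=
      HasDerivAt.comp r hD1 ((hasDerivAt_id r).const_mul M)
    exact ⟨(hasDerivAt_id' r).mul hc0, (hasDerivAt_id' r).mul hc1⟩
  constructor
  · intro r hr
    obtain ⟨h0, h1⟩ := key r hr
    have hg := h0.const_mul (M / (m + a))
    refine ⟨h1.differentiableAt, hg.differentiableAt, ?_, ?_⟩
    · rw [hg.deriv]
      have hz : (M * r) ≠ 0 := (mul_pos hMpos hr).ne'
      push_cast
      field_simp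
      rw [show r * M = M * r from mul_comm r M]
      linear_combination (-r * sbI (k + 1) (M * r)) * hM2
    · rw [h1.deriv]
      have hz : (M * r) ≠ 0 := (mul_pos hMpos hr).ne'
      push_cast
      field_simp
      ring
  · intro r hr
    obtain ⟨h0, h1⟩ := key r hr
    have hg := h1.const_mul (M / (m + a))
    refine ⟨h0.differentiableAt, hg.differentiableAt, ?_, ?_⟩
    · rw [hg.deriv]
      have hz : (M * r) ≠ 0 := (mul_pos hMpos hr).ne'
      push_cast
      field_simp
      rw [show r * M = M * r from mul_comm r M]
      linear_combination (-r * sbI k (M * r)) * hM2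
    · rw [h0.deriv]
      have hz : (M * r) ≠ 0 := (mul_pos hMpos hr).ne'
      push_cast
      field_simp
      ring
end

section
/- Let m > 0, a ∈ (−m, m), M := √(m² − a²), and let n ≥ 1 be an integer. For k = n, define f(r) := r · k_n(Mr) and g(r) := −(M/(m+a)) r · k_{n−1}(Mr); for k = −n, define f(r) := r · k_{n−1}(Mr) and g(r) := −(M/(m+a)) r · k_n(Mr). Then in both cases f and g are differentiable on (0, ∞) and satisfy, for all r > 0, the radial Dirac eigenvalue system: (m − a) f(r) − g'(r) + (k/r) g(r) = 0 and f'(r) + (k/r) f(r) − (m + a) g(r) = 0. -/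
open Real Filter MeasureTheory

lemma sbK_hasDerivAt : ∀ (n : ℕ) (z : ℝ), 0 < z →
    HasDerivAt (sbK n) (-(sbK (n+1) z) + ((n : ℝ)/z) * sbK n z) z := by
  intro n
  induction n using Nat.strong_induction_on with
  | _ n ih =>
    match n with
    | 0 =>
      intro z hz
      have hz0 : z ≠ 0 := hz.ne'
      have h1 : HasDerivAt (fun z : ℝ => Real.exp (-z)) (Real.exp (-z) * (-1)) z :=
        HasDerivAt.exp (hasDerivAt_neg z) |>.congr_deriv (by ring)
      have h2 : HasDerivAt (fun z : ℝ => Real.exp (-z) / z)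
          ((Real.exp (-z) * (-1) * z - Real.exp (-z) * 1) / z ^ 2) z :=
        h1.div (hasDerivAt_id z) hz0
      have : sbK 0 = fun z : ℝ => Real.exp (-z) / z := rfl
      rw [this]
      convert h2 using 1
      simp only [sbK]
      field_simp
      ring
    | 1 =>
      intro z hz
      have hz0 : z ≠ 0 := hz.ne'
      have h1 : HasDerivAt (fun z : ℝ => Real.exp (-z)) (Real.exp (-z) * (-1)) z :=
        HasDerivAt.exp (hasDerivAt_neg z) |>.congr_deriv (by ring)
      have h2 : HasDerivAt (fun z : ℝ => 1 / z + 1 / z ^ 2)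
          (-(1 / z ^ 2) + (-(2 * z) / (z ^ 2) ^ 2)) z := by
        have ha : HasDerivAt (fun z : ℝ => 1 / z) (-(1 / z ^ 2)) z := by
          simpa using (hasDerivAt_inv hz0)
        have hb : HasDerivAt (fun z : ℝ => 1 / z ^ 2) (-(2 * z) / (z ^ 2) ^ 2) z := by
          have : HasDerivAt (fun z : ℝ => z ^ 2) (2 * z) z := by
            simpa using hasDerivAt_pow 2 z
          simpa [one_div] using this.fun_inv (pow_ne_zero 2 hz0)
        exact ha.add hb
      have h3 := h1.mul h2
      have : sbK 1 = fun z : ℝ => Real.exp (-z) * (1 / z + 1 / z ^ 2) := rfl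
      rw [this]
      refine h3.congr_deriv ?_
      simp only [sbK]
      field_simp
      ring
    | (k + 2) =>
      intro z hz
      have hz0 : z ≠ 0 := hz.ne'
      have hk := ih k (by omega) z hz
      have hk1 := ih (k+1) (by omega) z hz
      have hc : HasDerivAt (fun z : ℝ => (2 * (k + 1 : ℝ) + 1) / z)
          (-((2 * (k + 1 : ℝ) + 1) / z ^ 2)) z := by
        have := (hasDerivAt_inv hz0).const_mul (2 * (k + 1 : ℝ) + 1)
        simpa [div_eq_mul_inv, mul_comm] using this
      have h := hk.add (hc.mul hk1)
      have he : sbK (k+2) = fun z : ℝ =>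
          sbK k z + ((2 * (k + 1 : ℝ) + 1) / z) * sbK (k + 1) z := rfl
      rw [he]
      refine h.congr_deriv ?_
      have hrec : sbK (k+3) z = sbK (k+1) z + ((2 * (k + 2 : ℝ) + 1) / z) * sbK (k + 2) z := by
        show sbK ((k+1)+2) z = _
        simp only [sbK]
        push_cast
        ring
      have hrec2 : sbK (k+2) z = sbK k z + ((2 * (k + 1 : ℝ) + 1) / z) * sbK (k + 1) z := rfl
      rw [hrec, hrec2]
      push_cast
      field_simp
      ring

lemma sbK_hasDerivAt_down (n : ℕ) (hn : 1 ≤ n) (z : ℝ) (hz : 0 < z) :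
    HasDerivAt (sbK n) (-(sbK (n-1) z) - (((n:ℝ)+1)/z) * sbK n z) z := by
  obtain ⟨k, rfl⟩ : ∃ k, n = k+1 := ⟨n-1, by omega⟩
  have h := sbK_hasDerivAt (k+1) z hz
  convert h using 1
  have hrec : sbK (k+2) z = sbK k z + ((2*(k+1:ℝ)+1)/z) * sbK (k+1) z := rfl
  rw [hrec]
  simp only [Nat.add_sub_cancel]
  push_cast
  field_simp
  ring

/-- The exterior (decaying at infinity) solutions of the radial Dirac eigenvalue system:
for `k = n`, `f(r) = r k_n(Mr)`, `g(r) = -(M/(m+a)) r k_{n-1}(Mr)`; for `k = -n`,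
`f(r) = r k_{n-1}(Mr)`, `g(r) = -(M/(m+a)) r k_n(Mr)`. In both cases `f, g` are
differentiable on `(0,∞)` and satisfy `(m-a) f - g' + (k/r) g = 0` and
`f' + (k/r) f - (m+a) g = 0`. -/
theorem radial_dirac_exterior_solution (m a : ℝ) (hm : 0 < m) (ha : a ∈ Set.Ioo (-m) m)
    (M : ℝ) (hM : M = Real.sqrt (m ^ 2 - a ^ 2)) (n : ℕ) (hn : 1 ≤ n) :
    (∀ r : ℝ, 0 < r →
      DifferentiableAt ℝ (fun r : ℝ => r * sbK n (M * r)) r ∧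
      DifferentiableAt ℝ (fun r : ℝ => -(M / (m + a)) * (r * sbK (n - 1) (M * r))) r ∧
      (m - a) * (r * sbK n (M * r)) -
          deriv (fun r : ℝ => -(M / (m + a)) * (r * sbK (n - 1) (M * r))) r +
          ((n : ℝ) / r) * (-(M / (m + a)) * (r * sbK (n - 1) (M * r))) = 0 ∧
      deriv (fun r : ℝ => r * sbK n (M * r)) r + ((n : ℝ) / r) * (r * sbK n (M * r)) -
          (m + a) * (-(M / (m + a)) * (r * sbK (n - 1) (M * r))) = 0) ∧
    (∀ r : ℝ, 0 < r →
      DifferentiableAt ℝ (fun r : ℝ => r * sbK (n - 1) (M * r)) r ∧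
      DifferentiableAt ℝ (fun r : ℝ => -(M / (m + a)) * (r * sbK n (M * r))) r ∧
      (m - a) * (r * sbK (n - 1) (M * r)) -
          deriv (fun r : ℝ => -(M / (m + a)) * (r * sbK n (M * r))) r +
          ((-(n : ℝ)) / r) * (-(M / (m + a)) * (r * sbK n (M * r))) = 0 ∧
      deriv (fun r : ℝ => r * sbK (n - 1) (M * r)) r +
          ((-(n : ℝ)) / r) * (r * sbK (n - 1) (M * r)) -
          (m + a) * (-(M / (m + a)) * (r * sbK n (M * r))) = 0) := by
  have hsq : 0 < m^2 - a^2 := by nlinarith [ha.1, ha.2]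
  have hM2 : M^2 = m^2 - a^2 := by rw [hM]; exact Real.sq_sqrt hsq.le
  have hMpos : 0 < M := by rw [hM]; exact Real.sqrt_pos.2 hsq
  have hma : 0 < m + a := by linarith [ha.1]
  have key : ∀ r : ℝ, 0 < r →
      HasDerivAt (fun r : ℝ => r * sbK n (M*r))
        (1 * sbK n (M*r) + r * ((-(sbK (n-1) (M*r)) - (((n:ℝ)+1)/(M*r)) * sbK n (M*r)) * M)) r ∧
      HasDerivAt (fun r : ℝ => r * sbK (n-1) (M*r))
        (1 * sbK (n-1) (M*r) + r * ((-(sbK n (M*r)) + (((n:ℝ)-1)/(M*r)) * sbK (n-1) (M*r)) * M)) r := by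
    intro r hr
    have hz : 0 < M * r := mul_pos hMpos hr
    have hinner : HasDerivAt (fun r : ℝ => M * r) M r := by
      simpa using (hasDerivAt_id r).const_mul M
    have hKn : HasDerivAt (fun r => sbK n (M*r))
        ((-(sbK (n-1) (M*r)) - (((n:ℝ)+1)/(M*r)) * sbK n (M*r)) * M) r :=
      (sbK_hasDerivAt_down n hn _ hz).comp r hinner
    have hKn1 : HasDerivAt (fun r => sbK (n-1) (M*r))
        ((-(sbK n (M*r)) + (((n:ℝ)-1)/(M*r)) * sbK (n-1) (M*r)) * M) r := by
      have h := (sbK_hasDerivAt (n-1) (M*r) hz).comp r hinner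
      have e1 : n - 1 + 1 = n := by omega
      have e2 : ((n-1 : ℕ) : ℝ) = (n : ℝ) - 1 := by
        push_cast [Nat.cast_sub hn]; ring
      rw [e1, e2] at h
      exact h
    exact ⟨(hasDerivAt_id r).mul hKn, (hasDerivAt_id r).mul hKn1⟩
  constructor
  · intro r hr
    obtain ⟨hf, hg0⟩ := key r hr
    have hg := hg0.const_mul (-(M/(m+a)))
    refine ⟨hf.differentiableAt, hg.differentiableAt, ?_, ?_⟩
    · rw [hg.deriv]
      set K := sbK n (M*r)
      set P := sbK (n-1) (M*r)
      field_simp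
      linear_combination (-(r*K)) * hM2
    · rw [hf.deriv]
      set K := sbK n (M*r)
      set P := sbK (n-1) (M*r)
      field_simp
      ring
  · intro r hr
    obtain ⟨hf0, hf⟩ := key r hr
    have hg := hf0.const_mul (-(M/(m+a)))
    refine ⟨hf.differentiableAt, hg.differentiableAt, ?_, ?_⟩
    · rw [hg.deriv]
      set K := sbK n (M*r)
      set P := sbK (n-1) (M*r)
      field_simp
      linear_combination (-(r*P)) * hM2
    · rw [hf.deriv]
      set K := sbK n (M*r)
      set P := sbK (n-1) (M*r)
      field_simp
      ring
end

section
/- Let m > 0, a ∈ (−m, m), M := √(m² − a²), λ ∈ ℝ, and let n ≥ 1 be an integer. There exists a pair (A, B) ∈ ℝ² with (A, B) ≠ (0, 0) satisfying the two linear equations A[(λ/2) i_n(M) + (M/(m+a)) i_{n−1}(M)] + B[(λ/2) k_n(M) + (M/(m+a)) k_{n−1}(M)] = 0 and A[−i_n(M) + (λ/2)(M/(m+a)) i_{n−1}(M)] + B[k_n(M) − (λ/2)(M/(m+a)) k_{n−1}(M)] = 0 (the δ-shell matching conditions M⁻_λ φ(1⁺) + M⁺_λ φ(1⁻) = 0 for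 the interior i-solution and exterior k-solution) if and only if D_n(a, λ) = 0, i.e. λ²/4 − ((m + a) d_n(M) − (m − a) d_{n−1}(M)) λ − 1 = 0. -/
open Real Filter MeasureTheory

/-- Cross-product (Wronskian-type) identity for the modified spherical Bessel
functions: `i_n(z) k_{n+1}(z) + i_{n+1}(z) k_n(z) = 1/z²`. -/
lemma sbI_sbK_wronskian (z : ℝ) (hz : z ≠ 0) (n : ℕ) :
    sbI n z * sbK (n + 1) z + sbI (n + 1) z * sbK n z = 1 / z ^ 2 := by
  induction n with
  | zero =>
      simp only [sbI, sbK]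
      have hE : Real.exp (-z) * Real.exp z = 1 := by rw [← Real.exp_add]; simp
      have h2 : Real.sinh z + Real.cosh z = Real.exp z := by
        rw [Real.sinh_eq, Real.cosh_eq]; ring
      field_simp
      linear_combination (z * Real.exp (-z)) * h2 + z * hE
  | succ k ih =>
      show sbI (k+1) z * sbK (k+2) z + sbI (k+2) z * sbK (k+1) z = 1 / z ^ 2
      simp only [sbI, sbK] at ih ⊢
      ring_nf
      ring_nf at ih
      linarith [ih]

/-- A homogeneous 2×2 linear system has a nontrivial solution iff its
determinant vanishes. -/
lemma two_by_two (p q r s : ℝ) :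
    (∃ A B : ℝ, (A, B) ≠ (0, 0) ∧ A * p + B * q = 0 ∧ A * r + B * s = 0) ↔
    p * s - q * r = 0 := by
  constructor
  · rintro ⟨A, B, hAB, h1, h2⟩
    have hA : A * (p * s - q * r) = 0 := by linear_combination s * h1 - q * h2
    have hB : B * (p * s - q * r) = 0 := by linear_combination p * h2 - r * h1
    rcases mul_eq_zero.mp hA with hA0 | h
    · rcases mul_eq_zero.mp hB with hB0 | h
      · exact absurd (by simp [hA0, hB0]) hAB
      · exact h
    · exact h
  · intro hdet
    by_cases hp : p = 0 ∧ q = 0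
    · by_cases hr : r = 0 ∧ s = 0
      · exact ⟨1, 0, by simp, by simp [hp.1], by simp [hr.1]⟩
      · refine ⟨s, -r, ?_, by simp [hp.1, hp.2], by ring⟩
        intro hc
        rw [Prod.mk.injEq] at hc
        exact hr ⟨neg_eq_zero.mp hc.2, hc.1⟩
    · refine ⟨q, -p, ?_, by ring, by linear_combination -hdet⟩
      intro hc
      rw [Prod.mk.injEq] at hc
      exact hp ⟨neg_eq_zero.mp hc.2, hc.1⟩

/-- The δ-shell matching conditions `M⁻_λ φ(1⁺) + M⁺_λ φ(1⁻) = 0` for the interior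
`i`-solution and exterior `k`-solution admit a nontrivial solution `(A, B) ≠ (0, 0)`
if and only if `D_n(a, λ) = λ²/4 - ((m+a) d_n(M) - (m-a) d_{n-1}(M)) λ - 1 = 0`,
where `M = √(m²-a²)`. -/
theorem delta_shell_matching_iff (m a lam : ℝ) (hm : 0 < m) (ha : a ∈ Set.Ioo (-m) m)
    (M : ℝ) (hM : M = Real.sqrt (m ^ 2 - a ^ 2)) (n : ℕ) (hn : 1 ≤ n) :
    (∃ A B : ℝ, (A, B) ≠ (0, 0) ∧
      A * ((lam / 2) * sbI n M + (M / (m + a)) * sbI (n - 1) M) +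
        B * ((lam / 2) * sbK n M + (M / (m + a)) * sbK (n - 1) M) = 0 ∧
      A * (-(sbI n M) + (lam / 2) * (M / (m + a)) * sbI (n - 1) M) +
        B * (sbK n M - (lam / 2) * (M / (m + a)) * sbK (n - 1) M) = 0) ↔
    lam ^ 2 / 4 - ((m + a) * dCoef n M - (m - a) * dCoef (n - 1) M) * lam - 1 = 0 := by
  obtain ⟨k, rfl⟩ : ∃ k, n = k + 1 := ⟨n - 1, (Nat.succ_pred_eq_of_pos hn).symm⟩
  obtain ⟨ha1, ha2⟩ := ha
  have hma : 0 < m + a := by linarith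
  have hma' : 0 < m - a := by linarith
  have hsq : (0:ℝ) < m ^ 2 - a ^ 2 := by nlinarith
  have hMpos : 0 < M := hM ▸ Real.sqrt_pos.mpr hsq
  have hM2 : M ^ 2 = m ^ 2 - a ^ 2 := by
    rw [hM, Real.sq_sqrt hsq.le]
  have hW := sbI_sbK_wronskian M hMpos.ne' k
  have hW' : M ^ 2 * (sbI k M * sbK (k + 1) M + sbI (k + 1) M * sbK k M) = 1 := by
    rw [hW]; field_simp
  simp only [Nat.add_sub_cancel]
  rw [two_by_two]
  set I0 := sbI k M
  set I1 := sbI (k + 1) M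
  set K0 := sbK k M
  set K1 := sbK (k + 1) M
  have hkey : lam ^ 2 / 4 - ((m + a) * dCoef (k + 1) M - (m - a) * dCoef k M) * lam - 1 =
      -((m + a) * M) *
        (((lam / 2) * I1 + (M / (m + a)) * I0) * (K1 - (lam / 2) * (M / (m + a)) * K0) -
         ((lam / 2) * K1 + (M / (m + a)) * K0) * (-(I1) + (lam / 2) * (M / (m + a)) * I0)) := by
    have hu : (m + a) * (m + a)⁻¹ = 1 := mul_inv_cancel₀ hma.ne'
    simp only [dCoef, div_eq_mul_inv]
    linear_combination
      (-(lam * M ^ 3 * (m + a)⁻¹ * I0 * K0) - lam * M * I0 * K0 * (m - a) +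
        (1 - lam ^ 2 / 4) * M ^ 2 * (I0 * K1 + I1 * K0)) * hu +
      (-(lam * M * I0 * K0 * (m + a)⁻¹)) * hM2 + (1 - lam ^ 2 / 4) * hW'
  constructor
  · intro h
    rw [hkey, h, mul_zero]
  · intro h
    have := hkey.symm.trans h
    rcases mul_eq_zero.mp this with h0 | h0
    · have hpos : (0:ℝ) < (m + a) * M := by positivity
      exact absurd (neg_eq_zero.mp h0) hpos.ne'
    · exact h0
end
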